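/- arXiv:1706.09058 — 6 statements merged into one kernel-verified Lean document; each statement's English description precedes it below -/
import Mathlib

section
/- If a sequence {a_n} of positive real numbers satisfies: there exists a sequence {b_n} of positive reals, a constant c > 0, and an index n_0 such that for all n > n_0, b_n * (a_n / a_{n+1}) - b_{n+1} ≥ c, then the series ∑ a_n converges. -/
/-- Sufficiency direction of Kummer's test. -/
theorem kummer_sufficiency (a b : ℕ → ℝ) (ha : ∀ n, 0 < a n) (hb : ∀ n, 0 < b n)
    (c : ℝ) (hc : 0 < c) (n₀ : ℕ)
    (h : ∀ n > n₀, b n * (a n / a (n + 1)) - b (n + 1) ≥ c) :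
    Summable a := by
  set f : ℕ → ℝ := fun k => b (k + n₀ + 1) * a (k + n₀ + 1) with hf
  have key : ∀ k : ℕ, c * a (k + n₀ + 2) ≤ f k - f (k + 1) := by
    intro k
    have hn : k + n₀ + 1 > n₀ := by omega
    have h1 := h _ hn
    have hpos : 0 < a (k + n₀ + 1 + 1) := ha _
    have hd : a (k + n₀ + 1) / a (k + n₀ + 1 + 1) * a (k + n₀ + 1 + 1) = a (k + n₀ + 1) :=
      div_mul_cancel₀ _ hpos.ne'
    have h2 := mul_le_mul_of_nonneg_right h1 hpos.le
    simp only [hf]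
    have he : k + 1 + n₀ + 1 = k + n₀ + 2 := by ring
    rw [he]
    have he2 : k + n₀ + 1 + 1 = k + n₀ + 2 := by ring
    rw [he2] at h2 hd hpos
    have h3 : (b (k + n₀ + 1) * (a (k + n₀ + 1) / a (k + n₀ + 2)) - b (k + n₀ + 2)) * a (k + n₀ + 2)
        = b (k + n₀ + 1) * (a (k + n₀ + 1) / a (k + n₀ + 2) * a (k + n₀ + 2))
          - b (k + n₀ + 2) * a (k + n₀ + 2) := by ring
    rw [h3, hd] at h2
    linarith
  have hsum : Summable (fun k => a (k + (n₀ + 2))) := by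
    apply summable_of_sum_range_le (c := f 0 / c) (fun k => (ha _).le)
    intro N
    have tel : ∑ k ∈ Finset.range N, (f k - f (k + 1)) = f 0 - f N :=
      Finset.sum_range_sub' f N
    have hb1 : c * ∑ k ∈ Finset.range N, a (k + (n₀ + 2)) ≤ f 0 - f N := by
      rw [Finset.mul_sum, ← tel]
      apply Finset.sum_le_sum
      intro k _
      have := key k
      have he : k + (n₀ + 2) = k + n₀ + 2 := by ring
      rw [he]
      exact this
    have hfN : 0 ≤ f N := le_of_lt (mul_pos (hb _) (ha _))
    rw [le_div_iff₀ hc]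
    nlinarith
  exact (summable_nat_add_iff (n₀ + 2)).mp hsum
end

section
/- If a sequence {a_n} of positive real numbers has a convergent series ∑ a_n, then there exists a sequence {b_n} of positive real numbers such that for all n ≥ 1, b_n * (a_n / a_{n+1}) - b_{n+1} = 1. -/
/-- Necessity direction of Kummer's test. -/
theorem kummer_necessity (a : ℕ → ℝ) (ha : ∀ n, 0 < a n) (hsum : Summable a) :
    ∃ b : ℕ → ℝ, (∀ n, 0 < b n) ∧
      ∀ n ≥ 1, b n * (a n / a (n + 1)) - b (n + 1) = 1 := by
  refine ⟨fun n => (∑' k, a (n + 1 + k)) / a n, fun n => ?_, fun n _ => ?_⟩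
  · exact div_pos (Summable.tsum_pos ((hsum.comp_injective (add_right_injective (n+1)))) (fun i => (ha _).le) 0 (ha _)) (ha n)
  · have hS : ∀ m : ℕ, Summable (fun k => a (m + k)) :=
      fun m => hsum.comp_injective (add_right_injective m)
    have key : (∑' k, a (n + 1 + k)) = a (n + 1) + ∑' k, a (n + 2 + k) := by
      rw [Summable.tsum_eq_zero_add (hS (n+1))]
      simp only [add_zero]
      congr 1
      apply tsum_congr; intro k; congr 1; ring
    have h1 : (∑' k, a (n + 1 + k)) / a n * (a n / a (n + 1)) = (∑' k, a (n + 1 + k)) / a (n + 1) := by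
      rw [div_mul_div_comm, mul_comm (a n) (a (n+1)), mul_div_mul_right _ _ (ha n).ne']
    have key2 : (∑' k, a (n + 1 + 1 + k)) = ∑' k, a (n + 2 + k) :=
      tsum_congr fun k => by ring_nf
    rw [h1, key, key2, ← sub_div, add_sub_cancel_right, div_self (ha (n+1)).ne']
end

section
/- A sequence {a_n} of positive real numbers is summable if and only if there exists a sequence {b_n} of positive reals and an index n_0 such that for all n > n_0, b_n * (a_n / a_{n+1}) - b_{n+1} ≥ 1. -/
/-! Kummer's test: if `b n * a n - b (n + 1) * a (n + 1) ≥ a (n + 1)` eventually, then the partial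
sums of `a` telescope against the nonnegative sequence `b n * a n` and stay bounded. Conversely,
for a summable positive `a` the choice `b n = (∑_{k > n} a k) / a n` makes the Kummer expression
identically `1`, since consecutive tails differ by one term. -/

open Finset

theorem summable_of_le_sub_succ {f c : ℕ → ℝ} (hf : ∀ n, 0 ≤ f n) (hc : ∀ n, 0 ≤ c n)
    (h : ∀ n, f n ≤ c n - c (n + 1)) : Summable f := by
  refine summable_of_sum_range_le hf (c := c 0) fun n => ?_
  calc ∑ i ∈ range n, f i ≤ ∑ i ∈ range n, (c i - c (i + 1)) := sum_le_sum fun i _ => h i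
    _ = c 0 - c n := sum_range_sub' c n
    _ ≤ c 0 := sub_le_self _ (hc n)

theorem summable_of_kummer {a b : ℕ → ℝ} {n₀ : ℕ} (ha : ∀ n, 0 < a n) (hb : ∀ n, 0 ≤ b n)
    (h : ∀ n > n₀, b n * (a n / a (n + 1)) - b (n + 1) ≥ 1) : Summable a := by
  have telescoping : ∀ n > n₀, a (n + 1) ≤ b n * a n - b (n + 1) * a (n + 1) := by
    intro n hn
    have := mul_le_mul_of_nonneg_right (h n hn) (ha (n + 1)).le
    rwa [one_mul, sub_mul, mul_assoc, div_mul_cancel₀ _ (ha (n + 1)).ne'] at this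
  refine (summable_nat_add_iff (n₀ + 2)).1 <|
    summable_of_le_sub_succ (c := fun k => b (k + n₀ + 1) * a (k + n₀ + 1))
      (fun k => (ha _).le) (fun k => mul_nonneg (hb _) (ha _).le) fun k => ?_
  rw [show k + (n₀ + 2) = k + n₀ + 1 + 1 by omega, show k + 1 + n₀ + 1 = k + n₀ + 1 + 1 by omega]
  exact telescoping (k + n₀ + 1) (by omega)

noncomputable def tailSum (a : ℕ → ℝ) (m : ℕ) : ℝ := ∑' k, a (k + m)

theorem tailSum_eq_add_tailSum_succ {a : ℕ → ℝ} (hs : Summable a) (m : ℕ) :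
    tailSum a m = a m + tailSum a (m + 1) := by
  rw [tailSum, ((summable_nat_add_iff m).2 hs).tsum_eq_zero_add, tailSum, zero_add]
  simp only [add_right_comm _ 1, add_assoc]

theorem tailSum_pos {a : ℕ → ℝ} (hs : Summable a) (ha : ∀ n, 0 < a n) (m : ℕ) :
    0 < tailSum a m :=
  ((summable_nat_add_iff m).2 hs).tsum_pos (fun _ => (ha _).le) 0 (ha _)

theorem kummer_tailSum_eq_one {a : ℕ → ℝ} (hs : Summable a) (ha : ∀ n, 0 < a n) (n : ℕ) :
    tailSum a (n + 1) / a n * (a n / a (n + 1)) - tailSum a (n + 2) / a (n + 1) = 1 := by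
  have := (ha n).ne'
  have := (ha (n + 1)).ne'
  rw [tailSum_eq_add_tailSum_succ hs (n + 1)]
  field_simp
  ring

/-- Kummer's characterization of summable positive sequences. -/
theorem kummer_characterization (a : ℕ → ℝ) (ha : ∀ n, 0 < a n) :
    Summable a ↔ ∃ (b : ℕ → ℝ) (n₀ : ℕ), (∀ n, 0 < b n) ∧
      ∀ n > n₀, b n * (a n / a (n + 1)) - b (n + 1) ≥ 1 := by
  refine ⟨fun hs => ?_, fun ⟨b, _, hb, h⟩ => summable_of_kummer ha (fun n => (hb n).le) h⟩
  exact ⟨fun n => tailSum a (n + 1) / a n, 0, fun n => div_pos (tailSum_pos hs ha _) (ha n),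
    fun n _ => (kummer_tailSum_eq_one hs ha n).ge⟩
end

section
/- For every sequence {q_n} of positive real numbers, the inequality p_{n+1} - p_n < p_n * (q_{n+1} - q_n + 1)/q_n holds for infinitely many values of n. -/
/-!
If the inequality failed for all large `n`, then with `a n = q n / p n` it would read
`1 / p (n + 1) ≤ a n - a (n + 1)` (Kummer's test). Since `a ≥ 0`, the tail sums of `∑ 1 / p n`
would telescope to at most `a N`, contradicting the divergence of the sum of prime reciprocals.
-/

/-- `p n` is the `n`-th prime number (1-indexed), as a real number. -/
noncomputable def p (n : ℕ) : ℝ := Nat.nth Nat.Prime (n - 1)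

open Filter Set

theorem summable_of_eventually_le_sub_succ {c a : ℕ → ℝ} (hc : ∀ n, 0 ≤ c n)
    (ha : ∀ n, 0 ≤ a n) (h : ∀ᶠ n in atTop, c n ≤ a n - a (n + 1)) : Summable c := by
  obtain ⟨N, hN⟩ := eventually_atTop.mp h
  refine (summable_nat_add_iff N).mp <| summable_of_sum_range_le (c := a N)
    (fun k => hc (k + N)) fun m => ?_
  calc ∑ k ∈ Finset.range m, c (k + N)
      ≤ ∑ k ∈ Finset.range m, (a (k + N) - a (k + 1 + N)) :=
        Finset.sum_le_sum fun k _ => by rw [add_right_comm]; exact hN _ (Nat.le_add_left N k)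
    _ = a N - a (m + N) := by simpa using Finset.sum_range_sub' (fun k => a (k + N)) m
    _ ≤ a N := sub_le_self _ (ha _)

theorem not_summable_one_div_nth_prime :
    ¬ Summable fun n => 1 / (Nat.nth Nat.Prime n : ℝ) := by
  intro h
  refine not_summable_one_div_on_primes <|
    (Function.Injective.summable_iff (Nat.nth_injective Nat.infinite_setOfPred_prime) ?_).mp ?_
  · intro n hn
    rw [Nat.range_nth_of_infinite Nat.infinite_setOfPred_prime] at hn
    exact indicator_of_notMem hn _
  · convert h using 2 with n
    exact indicator_of_mem (Nat.prime_nth_prime n) _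

theorem p_succ (n : ℕ) : p (n + 1) = Nat.nth Nat.Prime n := rfl

theorem p_pos (n : ℕ) : 0 < p n := by
  unfold p
  exact_mod_cast (Nat.prime_nth_prime _).pos

theorem one_div_le_div_sub_div {x y u v : ℝ} (hx : 0 < x) (hy : 0 < y) (hu : 0 < u)
    (h : x * ((v - u + 1) / u) ≤ y - x) : 1 / y ≤ u / x - v / y := by
  rw [mul_div_assoc', div_le_iff₀ hu] at h
  rw [div_sub_div _ _ hx.ne' hy.ne', div_le_div_iff₀ hy (mul_pos hx hy)]
  nlinarith

theorem gap_inequality (q : ℕ → ℝ) (hq : ∀ n, 0 < q n) :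
    {n : ℕ | p (n + 1) - p n < p n * ((q (n + 1) - q n + 1) / q n)}.Infinite := by
  rw [← Nat.frequently_atTop_iff_infinite]
  intro h_eventually_not
  refine not_summable_one_div_nth_prime <| summable_of_eventually_le_sub_succ
    (a := fun n => q n / p n) (fun n => by positivity)
    (fun n => (div_pos (hq n) (p_pos n)).le) ?_
  filter_upwards [h_eventually_not] with n hn
  rw [← p_succ]
  exact one_div_le_div_sub_div (p_pos n) (p_pos _) (hq n) (not_lt.mp hn)
end

section
/- liminf_{n→∞} (n/(2 p_n)) * (p_{n+1} - p_n) ≤ 1, where p_n is the n-th prime. -/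
lemma two_le_nth_prime (k : ℕ) : 2 ≤ Nat.nth Nat.Prime k :=
  (Nat.prime_nth_prime k).two_le

lemma two_le_p (k : ℕ) : (2 : ℝ) ≤ p k := by
  unfold p; exact_mod_cast two_le_nth_prime _

lemma nth_prime_ge (k : ℕ) : k + 2 ≤ Nat.nth Nat.Prime k := by
  induction k with
  | zero => exact two_le_nth_prime 0
  | succ k ih =>
    have h : Nat.nth Nat.Prime k < Nat.nth Nat.Prime (k + 1) :=
      (Nat.nth_lt_nth Nat.infinite_setOf_prime).mpr (Nat.lt_succ_self k)
    omega

lemma central_le (n : ℕ) (hn : 0 < n) :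
    Nat.centralBinom n ≤ (2 * n) ^ (Nat.count Nat.Prime (2 * n + 1)) := by
  have h0 : Nat.centralBinom n ≠ 0 := (Nat.centralBinom_pos n).ne'
  have hsub : (Nat.centralBinom n).primeFactors ⊆
      (Finset.range (2 * n + 1)).filter Nat.Prime := by
    intro q hq
    have hqp : q.Prime := Nat.prime_of_mem_primeFactors hq
    have hdvd : q ∣ Nat.centralBinom n := Nat.dvd_of_mem_primeFactors hq
    have hfac : q ∣ (2 * n).factorial := by
      have hchoose : Nat.centralBinom n ∣ (2 * n).factorial :=
        ⟨n.factorial * (2 * n - n).factorial, by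
          rw [Nat.centralBinom,
            ← Nat.choose_mul_factorial_mul_factorial (by omega : n ≤ 2 * n)]
          ring⟩
      exact hdvd.trans hchoose
    have hle : q ≤ 2 * n := (Nat.Prime.dvd_factorial hqp).mp hfac
    simp only [Finset.mem_filter, Finset.mem_range]
    exact ⟨by omega, hqp⟩
  calc Nat.centralBinom n
      = (Nat.centralBinom n).factorization.prod (· ^ ·) :=
        (Nat.factorization_prod_pow_eq_self h0).symm
    _ ≤ ∏ _q ∈ (Nat.centralBinom n).factorization.support, 2 * n := by
        rw [Finsupp.prod]
        apply Finset.prod_le_prod'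
        intro q hq
        have : q ^ ((2 * n).choose n).factorization q ≤ 2 * n :=
          Nat.pow_factorization_choose_le (by omega)
        simpa [Nat.centralBinom] using this
    _ = (2 * n) ^ (Nat.centralBinom n).factorization.support.card :=
        (Finset.prod_const _)
    _ ≤ (2 * n) ^ (Nat.count Nat.Prime (2 * n + 1)) := by
        apply Nat.pow_le_pow_right (by omega)
        rw [Nat.count_eq_card_filter_range]
        apply Finset.card_le_card
        rw [Nat.support_factorization]
        exact hsub

lemma cheb (n : ℕ) (hn : 4 ≤ n) :
    4 ^ n ≤ (2 * n) ^ (Nat.count Nat.Prime (2 * n + 1) + 1) := by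
  calc 4 ^ n ≤ n * Nat.centralBinom n := (Nat.four_pow_lt_mul_centralBinom n hn).le
    _ ≤ (2 * n) * Nat.centralBinom n := by
        apply Nat.mul_le_mul_right; omega
    _ ≤ (2 * n) * (2 * n) ^ (Nat.count Nat.Prime (2 * n + 1)) :=
        Nat.mul_le_mul_left _ (central_le n (by omega))
    _ = (2 * n) ^ (Nat.count Nat.Prime (2 * n + 1) + 1) := by
        rw [pow_succ]; ring

set_option maxHeartbeats 2000000 in
open Filter in
theorem liminf_scaled_gap_le_one :
    Filter.atTop.liminf (fun n : ℕ => ((n : ℝ) / (2 * p n)) * (p (n + 1) - p n)) ≤ 1 := by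
  have hmono : ∀ n : ℕ, p n ≤ p (n + 1) := by
    intro n
    unfold p
    have := Nat.nth_monotone (p := Nat.Prime) Nat.infinite_setOf_prime
      (show n - 1 ≤ n + 1 - 1 by omega)
    exact_mod_cast this
  have hnonneg : ∀ n : ℕ, 0 ≤ ((n : ℝ) / (2 * p n)) * (p (n + 1) - p n) := by
    intro n
    have h1 : (0:ℝ) < p n := lt_of_lt_of_le (by norm_num) (two_le_p n)
    apply mul_nonneg
    · positivity
    · linarith [hmono n]
  apply Filter.liminf_le_of_frequently_le
  · -- frequently ≤ 1
    by_contra hcon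
    rw [Filter.not_frequently] at hcon
    obtain ⟨N, hN⟩ := Filter.eventually_atTop.mp hcon
    set M : ℕ := max N 1 with hM
    have hM1 : 1 ≤ M := le_max_right _ _
    -- key pointwise consequence
    have hbig : ∀ k : ℕ, M ≤ k → ((k : ℝ) + 2) * p k ≤ (k : ℝ) * p (k + 1) := by
      intro k hk
      have hk' : N ≤ k := le_trans (le_max_left _ _) hk
      have hfk := hN k hk'
      push_neg at hfk
      have hp0 : (0:ℝ) < p k := lt_of_lt_of_le (by norm_num) (two_le_p k)
      have h2 : (1:ℝ) < ((k : ℝ) * (p (k + 1) - p k)) / (2 * p k) := by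
        rwa [div_mul_eq_mul_div] at hfk
      have h3 : 2 * p k < (k : ℝ) * (p (k + 1) - p k) :=
        (one_lt_div (by positivity)).mp h2
      nlinarith [mul_sub (k : ℝ) (p (k + 1)) (p k)]
    -- telescoping lower bound
    have tel : ∀ n : ℕ, M ≤ n →
        p M * ((n : ℝ) * ((n : ℝ) + 1)) ≤ p n * ((M : ℝ) * ((M : ℝ) + 1)) := by
      intro n hn
      induction n, hn using Nat.le_induction with
      | base => apply le_of_eq; ring
      | succ n hn ih =>
        have hb := hbig n hn
        have hpn : (2:ℝ) ≤ p n := two_le_p n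
        have hpn1 : (2:ℝ) ≤ p (n + 1) := two_le_p (n + 1)
        have hpM : (2:ℝ) ≤ p M := two_le_p M
        have hn1 : (1:ℝ) ≤ (n : ℝ) := by exact_mod_cast le_trans hM1 hn
        have h1 := mul_le_mul_of_nonneg_right ih
          (show (0:ℝ) ≤ (n : ℝ) + 2 by linarith)
        have h2 := mul_le_mul_of_nonneg_right hb
          (show (0:ℝ) ≤ (M : ℝ) * ((M : ℝ) + 1) by nlinarith)
        push_cast
        nlinarith [h1, h2, hn1, hpM, hpn1]
    -- p M ≥ M + 1
    have hpM_ge : (M : ℝ) + 1 ≤ p M := by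
      unfold p
      have h := nth_prime_ge (M - 1)
      have : M + 1 ≤ Nat.nth Nat.Prime (M - 1) := by omega
      exact_mod_cast this
    -- analytic step: find a good n
    have hlo : (fun x : ℝ => ((M : ℝ) + 1) * (Real.sqrt x * Real.log x))
        =o[atTop] (fun x : ℝ => x) := by
      have h1 : Real.log =o[atTop] (fun x : ℝ => x ^ (1/2 : ℝ)) :=
        isLittleO_log_rpow_atTop (by norm_num)
      have h2 : (fun x : ℝ => x ^ (1/2 : ℝ) * Real.log x)
          =o[atTop] (fun x : ℝ => x ^ (1/2 : ℝ) * x ^ (1/2 : ℝ)) :=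
        (Asymptotics.isBigO_refl (fun x : ℝ => x ^ (1/2 : ℝ)) atTop).mul_isLittleO h1
      have h3 : (fun x : ℝ => x ^ (1/2 : ℝ) * Real.log x) =o[atTop] (fun x : ℝ => x) := by
        apply h2.congr' (Eventually.of_forall fun x => rfl)
        filter_upwards [eventually_gt_atTop (0:ℝ)] with x hx
        rw [← Real.rpow_add hx]
        norm_num
      have h4 := h3.const_mul_left ((M : ℝ) + 1)
      apply h4.congr' _ (Eventually.of_forall fun x => rfl)
      filter_upwards [eventually_ge_atTop (0:ℝ)] with x hx
      rw [Real.sqrt_eq_rpow]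
    have hlog2 : (0:ℝ) < Real.log 2 := Real.log_pos (by norm_num)
    have hev : ∀ᶠ x : ℝ in atTop,
        ((M : ℝ) + 1) * (Real.sqrt x * Real.log x) ≤ Real.log 2 * x := by
      have := hlo.def hlog2
      filter_upwards [this, eventually_ge_atTop (1:ℝ)] with x h hx
      have hx0 : (0:ℝ) ≤ x := by linarith
      have hl : (0:ℝ) ≤ Real.log x := Real.log_nonneg hx
      have hnn : (0:ℝ) ≤ ((M : ℝ) + 1) * (Real.sqrt x * Real.log x) := by
        have := Real.sqrt_nonneg x
        positivity
      rw [Real.norm_eq_abs, Real.norm_eq_abs, abs_of_nonneg hnn, abs_of_nonneg hx0] at h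
      exact h
    -- transfer to natural numbers x = 2n
    have htend : Tendsto (fun n : ℕ => (2 * (n : ℝ))) atTop atTop :=
      (tendsto_natCast_atTop_atTop).const_mul_atTop (by norm_num)
    obtain ⟨n, hngood, hn4⟩ := ((htend.eventually hev).and (eventually_ge_atTop 4)).exists
    -- hngood : (M+1) * (√(2n) * log(2n)) ≤ log 2 * (2n),  hn4 : 4 ≤ n
    set c : ℕ := Nat.count Nat.Prime (2 * n + 1) with hc
    have hnat := cheb n hn4
    have hreal : (4:ℝ) ^ n ≤ (2 * (n:ℝ)) ^ (c + 1) := by exact_mod_cast hnat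
    have hn4' : (4:ℝ) ≤ (n:ℝ) := by exact_mod_cast hn4
    have h2n : (8:ℝ) ≤ 2 * (n:ℝ) := by linarith
    have hlogpos : 0 < Real.log (2 * (n:ℝ)) := Real.log_pos (by linarith)
    have hlog : (n:ℝ) * Real.log 4 ≤ ((c:ℝ) + 1) * Real.log (2 * (n:ℝ)) := by
      have h := Real.log_le_log (by positivity) hreal
      rw [Real.log_pow, Real.log_pow] at h
      push_cast at h
      linarith
    have hlog4 : Real.log 4 = 2 * Real.log 2 := by
      rw [show (4:ℝ) = 2 ^ 2 by norm_num, Real.log_pow]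
      push_cast; ring
    have hkey : Real.log 2 * (2 * (n:ℝ)) ≤ ((c:ℝ) + 1) * Real.log (2 * (n:ℝ)) := by
      nlinarith [hlog, hlog4]
    have hsqrt4 : Real.sqrt 4 = 2 := by
      rw [show (4:ℝ) = 2 ^ 2 by norm_num, Real.sqrt_sq (by norm_num)]
    have hs2 : (2:ℝ) ≤ Real.sqrt (2 * (n:ℝ)) := by
      have h := Real.sqrt_le_sqrt (show (4:ℝ) ≤ 2 * (n:ℝ) by linarith)
      rw [hsqrt4] at h
      exact h
    have hsnn : (0:ℝ) ≤ Real.sqrt (2 * (n:ℝ)) := Real.sqrt_nonneg _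
    -- (M√(2n)+2) log(2n) ≤ (M+1)√(2n) log(2n) ≤ log2 * 2n ≤ (c+1) log(2n)
    have hchain : ((M:ℝ) * Real.sqrt (2 * (n:ℝ)) + 2) * Real.log (2 * (n:ℝ)) ≤
        ((c:ℝ) + 1) * Real.log (2 * (n:ℝ)) := by
      have hM1' : (1:ℝ) ≤ (M:ℝ) := by exact_mod_cast hM1
      have h1 : (M:ℝ) * Real.sqrt (2 * (n:ℝ)) + 2 ≤
          ((M:ℝ) + 1) * Real.sqrt (2 * (n:ℝ)) := by nlinarith
      have h2 := mul_le_mul_of_nonneg_right h1 hlogpos.le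
      have h3 : ((M:ℝ) + 1) * Real.sqrt (2 * (n:ℝ)) * Real.log (2 * (n:ℝ)) ≤
          Real.log 2 * (2 * (n:ℝ)) := by
        calc ((M:ℝ) + 1) * Real.sqrt (2 * (n:ℝ)) * Real.log (2 * (n:ℝ))
            = ((M:ℝ) + 1) * (Real.sqrt (2 * (n:ℝ)) * Real.log (2 * (n:ℝ))) := by ring
          _ ≤ Real.log 2 * (2 * (n:ℝ)) := hngood
      linarith
    have hcount : (M:ℝ) * Real.sqrt (2 * (n:ℝ)) + 1 ≤ (c:ℝ) := by
      have := le_of_mul_le_mul_right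
        (by linarith [hchain] :
          ((M:ℝ) * Real.sqrt (2 * (n:ℝ)) + 2) * Real.log (2 * (n:ℝ)) ≤
            (((c:ℝ) + 1)) * Real.log (2 * (n:ℝ))) hlogpos
      linarith
    -- define j
    set j : ℕ := ⌈(M:ℝ) * Real.sqrt (2 * (n:ℝ))⌉₊ with hjdef
    have hM1' : (1:ℝ) ≤ (M:ℝ) := by exact_mod_cast hM1
    have hj_ge : (M:ℝ) * Real.sqrt (2 * (n:ℝ)) ≤ (j:ℝ) := Nat.le_ceil _
    have hj_lt : (j:ℝ) < (M:ℝ) * Real.sqrt (2 * (n:ℝ)) + 1 :=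
      Nat.ceil_lt_add_one (by positivity)
    have hjc : j < c := by
      have : (j:ℝ) < (c:ℝ) := by linarith
      exact_mod_cast this
    have hj2M : 2 * M ≤ j := by
      have : (2:ℝ) * (M:ℝ) ≤ (j:ℝ) := by nlinarith
      exact_mod_cast this
    have hjM : M < j := by omega
    have hjc' : j - 1 < Nat.count Nat.Prime (2 * n + 1) := by omega
    have hnth : Nat.nth Nat.Prime (j - 1) < 2 * n + 1 :=
      (Nat.lt_nth_iff_count_lt Nat.infinite_setOf_prime).mp hjc'
    have hpj : p j ≤ 2 * (n:ℝ) := by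
      unfold p
      have : Nat.nth Nat.Prime (j - 1) ≤ 2 * n := by omega
      exact_mod_cast this
    have hMn : (M:ℝ) * (2 * (n:ℝ)) ≤ (j:ℝ) ^ 2 := by
      have hsq := Real.sq_sqrt (show (0:ℝ) ≤ 2 * (n:ℝ) by linarith)
      have hms : (0:ℝ) ≤ (M:ℝ) * Real.sqrt (2 * (n:ℝ)) := by positivity
      have h := mul_le_mul hj_ge hj_ge hms (by positivity)
      have he : ((M:ℝ) * Real.sqrt (2 * (n:ℝ))) * ((M:ℝ) * Real.sqrt (2 * (n:ℝ)))
          = ((M:ℝ) * (M:ℝ)) * (2 * (n:ℝ)) := by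
        rw [mul_mul_mul_comm, Real.mul_self_sqrt (show (0:ℝ) ≤ 2 * (n:ℝ) by linarith)]
      have hMM : (M:ℝ) * (2 * (n:ℝ)) ≤ ((M:ℝ) * (M:ℝ)) * (2 * (n:ℝ)) := by
        nlinarith [hM1', h2n]
      calc (M:ℝ) * (2 * (n:ℝ)) ≤ ((M:ℝ) * (M:ℝ)) * (2 * (n:ℝ)) := hMM
        _ = ((M:ℝ) * Real.sqrt (2 * (n:ℝ))) * ((M:ℝ) * Real.sqrt (2 * (n:ℝ))) := he.symm
        _ ≤ (j:ℝ) * (j:ℝ) := h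
        _ = (j:ℝ) ^ 2 := (pow_two (j:ℝ)).symm
    have htel := tel j hjM.le
    have hj2 : (2:ℝ) ≤ (j:ℝ) := by
      have : (2:ℕ) ≤ j := by omega
      exact_mod_cast this
    have h1 := mul_le_mul_of_nonneg_right hpM_ge
      (show (0:ℝ) ≤ (j:ℝ) * ((j:ℝ) + 1) by positivity)
    have h2 := mul_le_mul_of_nonneg_right hpj
      (show (0:ℝ) ≤ (M:ℝ) * ((M:ℝ) + 1) by positivity)
    have h3 := mul_le_mul_of_nonneg_right hMn (show (0:ℝ) ≤ (M:ℝ) + 1 by linarith)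
    have hA : ((M:ℝ) + 1) * ((j:ℝ) * ((j:ℝ) + 1)) ≤ ((M:ℝ) + 1) * ((j:ℝ) ^ 2) := by
      nlinarith [h1, htel, h2, h3]
    have hB := le_of_mul_le_mul_left hA (show (0:ℝ) < (M:ℝ) + 1 by linarith)
    nlinarith [hB, hj2]
  · exact Filter.isBoundedUnder_of ⟨0, hnonneg⟩
end

section
/- For every sequence {q_n} of positive real numbers, the inequality 1 < n * (q_{n+1} - q_n + 1)/q_n holds for infinitely many natural numbers n. -/
/-!
Put `c n = q n / n`. For `n ≥ 1` the inequality at `n` is equivalent to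
`c n - c (n + 1) < 1 / (n + 1)`. If it failed for all large `n`, the sums of `1 / (n + 1)` would
telescope to at most `c N - c (N + m) ≤ c N`, since `c ≥ 0`; this contradicts the divergence of
the harmonic series.
-/

open Filter Finset

theorem frequently_sub_succ_lt_of_not_summable {c d : ℕ → ℝ} (hc : BddBelow (Set.range c))
    (hd : ∀ n, 0 ≤ d n) (hd_not : ¬Summable d) : ∃ᶠ n in atTop, c n - c (n + 1) < d n := by
  intro h_ev
  obtain ⟨N, hN⟩ := eventually_atTop.mp (h_ev.mono fun n hn => not_lt.mp hn)
  obtain ⟨B, hB⟩ := hc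
  refine hd_not ((summable_nat_add_iff N).mp
    (summable_of_sum_range_le (c := c N - B) (fun n => hd (n + N)) fun m => ?_))
  calc ∑ i ∈ range m, d (i + N)
      ≤ ∑ i ∈ range m, (c (i + N) - c (i + 1 + N)) :=
        sum_le_sum fun i _ => by simpa [add_right_comm] using hN (i + N) (by omega)
    _ = c N - c (m + N) := by simpa using sum_range_sub' (fun i => c (i + N)) m
    _ ≤ c N - B := by linarith [hB ⟨m + N, rfl⟩]

theorem not_summable_one_div_succ : ¬Summable fun n : ℕ => 1 / ((n : ℝ) + 1) := by
  simpa using (summable_nat_add_iff 1).not.mpr Real.not_summable_one_div_natCast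

theorem one_lt_mul_ratio_of_div_sub_div_lt {n : ℕ} {x y : ℝ} (hn : 0 < n) (hx : 0 < x)
    (h : x / n - y / (n + 1) < 1 / (n + 1)) : 1 < (n : ℝ) * ((y - x + 1) / x) := by
  have hn' : (0 : ℝ) < n := Nat.cast_pos.mpr hn
  have key : (n + 1) * x - n * y < n := by
    have := mul_lt_mul_of_pos_left h (mul_pos hn' (by positivity : (0 : ℝ) < n + 1))
    field_simp at this
    linarith
  rw [← mul_div_assoc, one_lt_div hx]
  linarith

theorem one_lt_n_mul_ratio (q : ℕ → ℝ) (hq : ∀ n, 0 < q n) :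
    {n : ℕ | 1 < (n : ℝ) * ((q (n + 1) - q n + 1) / q n)}.Infinite := by
  have hc : BddBelow (Set.range fun n : ℕ => q n / n) :=
    ⟨0, by rintro _ ⟨n, rfl⟩; exact div_nonneg (hq n).le n.cast_nonneg⟩
  have h_freq := frequently_sub_succ_lt_of_not_summable hc (fun n => by positivity)
    not_summable_one_div_succ
  refine Nat.frequently_atTop_iff_infinite.mp
    ((h_freq.and_eventually (eventually_gt_atTop 0)).mono fun n ⟨hlt, hn⟩ => ?_)
  exact one_lt_mul_ratio_of_div_sub_div_lt hn (hq n) (by exact_mod_cast hlt)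
end
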